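/- Let (K⁽ⁿ⁾)_{n≥1} be a consistent family of order-preserving Markov kernels on the powers of ℝ. Then for every n ≥ 2 and every bounded Borel supermodular function f on ℝⁿ, the function K⁽ⁿ⁾f is supermodular. -/
import Mathlib


open MeasureTheory ProbabilityTheory

/-- `y` is order-compatible with `x`. -/
def OrderCompat {n : ℕ} (x y : Fin n → ℝ) : Prop :=
  ∀ i j, x i ≤ x j → y i ≤ y j

/-- A family of Markov kernels on the powers `ℝⁿ` is consistent if it commutes with all
projections `πⁿ_{i₁,…,i_k}` (for `1 ≤ k ≤ n`, repetitions of indices allowed). -/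
def IsConsistentFamily (K : ∀ n : ℕ, Kernel (Fin n → ℝ) (Fin n → ℝ)) : Prop :=
  ∀ (n k : ℕ), 1 ≤ k → k ≤ n → ∀ (i : Fin k → Fin n) (x : Fin n → ℝ)
    (B : Set (Fin k → ℝ)), MeasurableSet B →
    K n x ((fun y => y ∘ i) ⁻¹' B) = K k (x ∘ i) B

/-- `f : ℝⁿ → ℝ` is supermodular. -/
def Supermodular {n : ℕ} (f : (Fin n → ℝ) → ℝ) : Prop :=
  ∀ x y : Fin n → ℝ, f x + f y ≤ f (x ⊔ y) + f (x ⊓ y)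

lemma orderCompat_measurableSet {n : ℕ} (x : Fin n → ℝ) :
    MeasurableSet {y : Fin n → ℝ | OrderCompat x y} := by
  have h : {y : Fin n → ℝ | OrderCompat x y}
      = ⋂ i, ⋂ j, {y : Fin n → ℝ | x i ≤ x j → y i ≤ y j} := by
    ext y; simp [OrderCompat, Set.mem_iInter]
  rw [h]
  refine MeasurableSet.iInter fun i => MeasurableSet.iInter fun j => ?_
  by_cases hij : x i ≤ x j
  · simp only [hij, forall_true_left]
    exact measurableSet_le (measurable_pi_apply i) (measurable_pi_apply j)
  · simp [hij]

/-- A consistent family of order-preserving Markov kernels on the powers of `ℝ` preserves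
supermodularity: for `n ≥ 2` and `f` bounded Borel supermodular on `ℝⁿ`, `K⁽ⁿ⁾f` is
supermodular. -/
theorem stmt17 (K : ∀ n : ℕ, Kernel (Fin n → ℝ) (Fin n → ℝ))
    [∀ n, IsMarkovKernel (K n)]
    (hcons : IsConsistentFamily K)
    (horder : ∀ (n : ℕ) (x : Fin n → ℝ), K n x {y | OrderCompat x y} = 1) :
    ∀ n, 2 ≤ n → ∀ f : (Fin n → ℝ) → ℝ, Measurable f → (∃ M, ∀ x, |f x| ≤ M) →
      Supermodular f → Supermodular (fun x => ∫ y, f y ∂(K n x)) := by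
  classical
  rintro n hn f hf ⟨M, hM⟩ hsm x z
  have hn1 : 1 ≤ n := le_trans (by norm_num) hn
  have hle : n ≤ n + n := Nat.le_add_right n n
  set w : Fin (n + n) → ℝ := Fin.append x z with hw
  set μ : Measure (Fin (n + n) → ℝ) := K (n + n) w with hμ
  have : IsProbabilityMeasure μ := inferInstance
  -- abbreviations for the projections
  set c : Fin n → Fin (n + n) := Fin.castAdd n with hc
  set d : Fin n → Fin (n + n) := Fin.natAdd n with hd
  set ι : Fin n → Fin (n + n) := fun j => if z j ≤ x j then c j else d j with hι
  set ι' : Fin n → Fin (n + n) := fun j => if z j ≤ x j then d j else c j with hι'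
  -- measurability of composition maps
  have hmeas_comp : ∀ i : Fin n → Fin (n + n),
      Measurable fun y : Fin (n + n) → ℝ => y ∘ i :=
    fun i => measurable_pi_lambda _ fun j => measurable_pi_apply _
  -- marginals
  have hmap : ∀ i : Fin n → Fin (n + n), μ.map (fun y => y ∘ i) = K n (w ∘ i) := by
    intro i
    ext B hB
    rw [Measure.map_apply (hmeas_comp i) hB]
    exact hcons (n + n) n hn1 hle i w B hB
  have hint : ∀ i : Fin n → Fin (n + n),
      ∫ y, f (y ∘ i) ∂μ = ∫ y, f y ∂(K n (w ∘ i)) := by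
    intro i
    rw [← hmap i, integral_map (hmeas_comp i).aemeasurable hf.aestronglyMeasurable]
  -- integrability of bounded measurable compositions
  have hintg : ∀ g : (Fin (n + n) → ℝ) → (Fin n → ℝ), Measurable g →
      Integrable (fun y => f (g y)) μ := by
    intro g hg
    refine ⟨(hf.comp hg).aestronglyMeasurable, ?_⟩
    apply HasFiniteIntegral.of_bounded (C := M)
    filter_upwards with y
    simpa [Real.norm_eq_abs] using hM (g y)
  have hmeas_sup : Measurable fun y : Fin (n + n) → ℝ => (y ∘ c) ⊔ (y ∘ d) :=
    measurable_pi_lambda _ fun j =>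
      (measurable_pi_apply (c j)).max (measurable_pi_apply (d j))
  have hmeas_inf : Measurable fun y : Fin (n + n) → ℝ => (y ∘ c) ⊓ (y ∘ d) :=
    measurable_pi_lambda _ fun j =>
      (measurable_pi_apply (c j)).min (measurable_pi_apply (d j))
  -- values of w under the projections
  have hwcj : ∀ j, w (c j) = x j := fun j => Fin.append_left x z j
  have hwdj : ∀ j, w (d j) = z j := fun j => Fin.append_right x z j
  have hwc : w ∘ c = x := funext hwcj
  have hwd : w ∘ d = z := funext hwdj
  have hwι : w ∘ ι = x ⊔ z := by
    funext j
    by_cases h : z j ≤ x j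
    · simp only [Function.comp_apply, hι, h, if_true, Pi.sup_apply]
      rw [hwcj j, sup_eq_left.mpr h]
    · simp only [Function.comp_apply, hι, h, if_false, Pi.sup_apply]
      rw [hwdj j, sup_eq_right.mpr (le_of_not_ge h)]
  have hwι' : w ∘ ι' = x ⊓ z := by
    funext j
    by_cases h : z j ≤ x j
    · simp only [Function.comp_apply, hι', h, if_true, Pi.inf_apply]
      rw [hwdj j, inf_eq_right.mpr h]
    · simp only [Function.comp_apply, hι', h, if_false, Pi.inf_apply]
      rw [hwcj j, inf_eq_left.mpr (le_of_not_ge h)]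
  -- a.e. order-compatibility
  have hae : ∀ᵐ y ∂μ, OrderCompat w y := by
    have h1 : μ {y | OrderCompat w y} = 1 := horder (n + n) w
    have := (prob_compl_eq_zero_iff (orderCompat_measurableSet w)).mpr h1
    rw [ae_iff]
    simpa [Set.compl_setOf] using this
  -- on the order-compatible set, sup and inf are coordinate selections
  have hsup_eq : ∀ᵐ y ∂μ, f ((y ∘ c) ⊔ (y ∘ d)) = f (y ∘ ι) := by
    filter_upwards [hae] with y hy
    congr 1
    funext j
    by_cases h : z j ≤ x j
    · have hyj : y (d j) ≤ y (c j) := by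
        apply hy
        rw [hwdj j, hwcj j]; exact h
      simp [hι, h, Pi.sup_apply, sup_eq_left.mpr hyj]
    · have hyj : y (c j) ≤ y (d j) := by
        apply hy
        rw [hwdj j, hwcj j]; exact le_of_not_ge h
      simp [hι, h, Pi.sup_apply, sup_eq_right.mpr hyj]
  have hinf_eq : ∀ᵐ y ∂μ, f ((y ∘ c) ⊓ (y ∘ d)) = f (y ∘ ι') := by
    filter_upwards [hae] with y hy
    congr 1
    funext j
    by_cases h : z j ≤ x j
    · have hyj : y (d j) ≤ y (c j) := by
        apply hy
        rw [hwdj j, hwcj j]; exact h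
      simp [hι', h, Pi.inf_apply, inf_eq_right.mpr hyj]
    · have hyj : y (c j) ≤ y (d j) := by
        apply hy
        rw [hwdj j, hwcj j]; exact le_of_not_ge h
      simp [hι', h, Pi.inf_apply, inf_eq_left.mpr hyj]
  -- put everything together
  have e1 : ∫ y, f y ∂(K n x) = ∫ y, f (y ∘ c) ∂μ := by rw [hint c, hwc]
  have e2 : ∫ y, f y ∂(K n z) = ∫ y, f (y ∘ d) ∂μ := by rw [hint d, hwd]
  have e3 : ∫ y, f y ∂(K n (x ⊔ z)) = ∫ y, f ((y ∘ c) ⊔ (y ∘ d)) ∂μ := by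
    rw [← hwι, ← hint ι]
    exact (integral_congr_ae hsup_eq).symm
  have e4 : ∫ y, f y ∂(K n (x ⊓ z)) = ∫ y, f ((y ∘ c) ⊓ (y ∘ d)) ∂μ := by
    rw [← hwι', ← hint ι']
    exact (integral_congr_ae hinf_eq).symm
  simp only
  rw [e1, e2, e3, e4, ← integral_add (hintg _ (hmeas_comp c)) (hintg _ (hmeas_comp d)),
    ← integral_add (hintg _ hmeas_sup) (hintg _ hmeas_inf)]
  refine integral_mono ((hintg _ (hmeas_comp c)).add (hintg _ (hmeas_comp d)))
    ((hintg _ hmeas_sup).add (hintg _ hmeas_inf)) fun y => ?_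
  exact hsm (y ∘ c) (y ∘ d)
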